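/- Let T ≥ 2 be an integer, i₀ > 0 a real number, and i : ℝ → ℝ a function that is nonnegative and differentiable on [0,∞). Let x* be a minimizer of C over the feasible set and let 1 ≤ k ≤ T−1. If x*_k > 0, then the stationarity (KKT) condition holds: ∑_{t=k}^{T-1} i'(x*_k)/D_t(x*)² = 1. -/

import Mathlib

/-!
Perturbing only the coordinate `x_k` of a minimizer turns the cost into a function of one real
variable, minimized at `x*_k`. Since `x*_k > 0`, this point is interior to the feasible range
`[0, ∞)`, so the derivative vanishes there. The coordinate `x_k` enters `D_t` exactly for `t ≥ k`,
so that derivative is `1 - ∑_{t ≥ k} i'(x*_k) / D_t(x*)²`.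
-/

/-- Partial information `D_t(x) = i₀ + ∑_{s=1}^{t} i(x_s)`. -/
noncomputable def Dinfo (i0 : ℝ) (i : ℝ → ℝ) (x : ℕ → ℝ) (t : ℕ) : ℝ :=
  i0 + ∑ s ∈ Finset.Icc 1 t, i (x s)

/-- Cost `C(x) = ∑_{t=1}^{T-1} 1/D_t(x) + ∑_{t=1}^{T-1} x_t`. -/
noncomputable def cost (T : ℕ) (i0 : ℝ) (i : ℝ → ℝ) (x : ℕ → ℝ) : ℝ :=
  (∑ t ∈ Finset.Icc 1 (T - 1), 1 / Dinfo i0 i x t) + ∑ t ∈ Finset.Icc 1 (T - 1), x t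

/-- Feasibility: `x_k ≥ 0` for `k = 1, …, T-1`. -/
def Feasible (T : ℕ) (x : ℕ → ℝ) : Prop :=
  ∀ k, 1 ≤ k → k ≤ T - 1 → 0 ≤ x k

open Finset Function

theorem Dinfo_update (i0 : ℝ) (i : ℝ → ℝ) (x : ℕ → ℝ) (k : ℕ) (y : ℝ) (t : ℕ) :
    Dinfo i0 i (update x k y) t =
      Dinfo i0 i x t + if k ∈ Icc 1 t then i y - i (x k) else 0 := by
  unfold Dinfo
  change i0 + ∑ s ∈ Icc 1 t, (i ∘ update x k y) s = _
  rw [comp_update]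
  split_ifs with hk
  · rw [sum_update_of_mem hk, sum_eq_add_sum_sdiff_singleton_of_mem hk (fun s => i (x s))]
    simp only [comp_apply]
    ring
  · rw [sum_update_of_notMem hk, add_zero]
    rfl

section

variable {i0 : ℝ} {i : ℝ → ℝ} {x : ℕ → ℝ} {k t T : ℕ}

theorem Dinfo_pos (hi0 : 0 < i0) (hnonneg : ∀ y, 0 ≤ y → 0 ≤ i y) (hx : Feasible T x)
    (ht : t ≤ T - 1) : 0 < Dinfo i0 i x t := by
  have hsum : 0 ≤ ∑ s ∈ Icc 1 t, i (x s) := sum_nonneg fun s hs => by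
    obtain ⟨hs1, hst⟩ := mem_Icc.mp hs
    exact hnonneg _ (hx s hs1 (hst.trans ht))
  exact add_pos_of_pos_of_nonneg hi0 hsum

theorem Feasible.update (hx : Feasible T x) (k : ℕ) {y : ℝ} (hy : 0 ≤ y) :
    Feasible T (update x k y) := by
  intro j hj1 hj2
  rcases eq_or_ne j k with rfl | hjk
  · simpa using hy
  · simpa [update_of_ne hjk] using hx j hj1 hj2

theorem hasDerivAt_Dinfo_update {i' : ℝ} (hi : HasDerivAt i i' (x k)) :
    HasDerivAt (fun y => Dinfo i0 i (update x k y) t)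
      (if k ∈ Icc 1 t then i' else 0) (x k) := by
  simp only [Dinfo_update]
  split_ifs
  · simpa using (hi.sub_const (i (x k))).const_add (Dinfo i0 i x t)
  · simpa using hasDerivAt_const (x k) (Dinfo i0 i x t + 0)

theorem hasDerivAt_cost_update {i' : ℝ} (hi : HasDerivAt i i' (x k))
    (hD : ∀ t ∈ Icc 1 (T - 1), Dinfo i0 i x t ≠ 0) (hk : k ∈ Icc 1 (T - 1)) :
    HasDerivAt (fun y => cost T i0 i (update x k y))
      (1 - ∑ t ∈ Icc k (T - 1), i' / Dinfo i0 i x t ^ 2) (x k) := by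
  have hinv : HasDerivAt (fun y => ∑ t ∈ Icc 1 (T - 1), 1 / Dinfo i0 i (update x k y) t)
      (∑ t ∈ Icc 1 (T - 1), -(if k ∈ Icc 1 t then i' else 0) / Dinfo i0 i x t ^ 2) (x k) := by
    refine HasDerivAt.fun_sum fun t ht => ?_
    have hDt : Dinfo i0 i (update x k (x k)) t ≠ 0 := by simpa using hD t ht
    have h := (hasDerivAt_Dinfo_update hi).inv hDt
    rw [update_eq_self] at h
    simp only [one_div]
    exact h
  have hlin : HasDerivAt (fun y => ∑ t ∈ Icc 1 (T - 1), update x k y t) 1 (x k) := by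
    simp only [sum_update_of_mem hk]
    exact (hasDerivAt_id (x k)).add_const _
  refine (hinv.add hlin).congr_deriv ?_
  have hfilter : Icc k (T - 1) = {t ∈ Icc 1 (T - 1) | k ∈ Icc 1 t} := by
    ext t
    simp only [mem_filter, mem_Icc] at hk ⊢
    omega
  simp only [hfilter, sum_filter, neg_div, sum_neg_distrib, ite_div, zero_div]
  ring

end

theorem kkt_stationarity_condition_general (T : ℕ) (i0 : ℝ) (hi0 : 0 < i0) (i : ℝ → ℝ)
    (hnonneg : ∀ y, 0 ≤ y → 0 ≤ i y)
    (hdiff : DifferentiableOn ℝ i (Set.Ici 0))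
    (xs : ℕ → ℝ) (hfeas : Feasible T xs)
    (hmin : ∀ x, Feasible T x → cost T i0 i xs ≤ cost T i0 i x)
    (k : ℕ) (hk1 : 1 ≤ k) (hk2 : k ≤ T - 1) (hpos : 0 < xs k) :
    ∑ t ∈ Finset.Icc k (T - 1), deriv i (xs k) / (Dinfo i0 i xs t) ^ 2 = 1 := by
  have hi : HasDerivAt i (deriv i (xs k)) (xs k) :=
    (hdiff.differentiableAt (Ici_mem_nhds hpos)).hasDerivAt
  have hD : ∀ t ∈ Icc 1 (T - 1), Dinfo i0 i xs t ≠ 0 := fun t ht =>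
    (Dinfo_pos hi0 hnonneg hfeas (mem_Icc.mp ht).2).ne'
  have hmin_line : IsMinOn (fun y => cost T i0 i (update xs k y)) (Set.Ici 0) (xs k) :=
    fun y hy => by simpa using hmin _ (hfeas.update k hy)
  have hcrit := (hmin_line.isLocalMin (Ici_mem_nhds hpos)).hasDerivAt_eq_zero
    (hasDerivAt_cost_update hi hD (mem_Icc.mpr ⟨hk1, hk2⟩))
  linarith

theorem kkt_stationarity_condition (T : ℕ) (hT : 2 ≤ T) (i0 : ℝ) (hi0 : 0 < i0) (i : ℝ → ℝ)
    (hnonneg : ∀ y, 0 ≤ y → 0 ≤ i y)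
    (hdiff : DifferentiableOn ℝ i (Set.Ici 0))
    (xs : ℕ → ℝ) (hfeas : Feasible T xs)
    (hmin : ∀ x, Feasible T x → cost T i0 i xs ≤ cost T i0 i x)
    (k : ℕ) (hk1 : 1 ≤ k) (hk2 : k ≤ T - 1) (hpos : 0 < xs k) :
    ∑ t ∈ Finset.Icc k (T - 1), deriv i (xs k) / (Dinfo i0 i xs t) ^ 2 = 1 :=
  kkt_stationarity_condition_general T i0 hi0 i hnonneg hdiff xs hfeas hmin k hk1 hk2 hpos
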